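/- Let Mᵢ=(Eᵢ,ρᵢ), i=1,2, be q-matroids with collections of cyclic flats Zᵢ, and let ρ be the rank function of M₁⊕M₂. Then for all subspaces V of E₁⊕E₂, ρ(V) = min over Z₁⊕Z₂ with Zᵢ∈Zᵢ of ( ρ₁(Z₁)+ρ₂(Z₂) + dim((V+(Z₁⊕Z₂))/(Z₁⊕Z₂)) ). -/

import Mathlib

/-!
For a single q-matroid and a subspace `X`, let `Z` be the cyclic core of the closure of `X`.
Between `Z` and `X + Z` every new vector raises the rank by exactly one: a vector that did not
would lie on a circuit inside `cl X`, hence inside `Z`. As `ρ (X + Z) = ρ X`, this gives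
`ρ X = ρ Z + dim ((X + Z) / Z)`, and `Z` is a cyclic flat. Applied to the two projections of a
subspace `X ≤ V` it turns any term of the direct-sum formula into a term of the cyclic-flat
formula that is no larger; conversely, `X = V ⊓ (Z₁ ⊕ Z₂)` bounds the term of any `Z₁ ⊕ Z₂`.
-/

open Submodule Module

namespace QM

variable (F : Type*) {E : Type*} [Field F] [AddCommGroup E] [Module F E]

/-- The rank axioms (R1)-(R3) of a q-matroid. -/
def IsRkFn (ρ : Submodule F E → ℕ) : Prop :=
  (∀ V : Submodule F E, ρ V ≤ finrank F V) ∧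
  (∀ ⦃V W : Submodule F E⦄, V ≤ W → ρ V ≤ ρ W) ∧
  (∀ V W : Submodule F E, ρ (V ⊔ W) + ρ (V ⊓ W) ≤ ρ V + ρ W)

variable {F}

/-- Independent spaces. -/
def Indep (ρ : Submodule F E → ℕ) (V : Submodule F E) : Prop := ρ V = finrank F V

/-- Circuits: dependent spaces all of whose proper subspaces are independent. -/
def IsCircuit (ρ : Submodule F E → ℕ) (C : Submodule F E) : Prop :=
  ¬ Indep ρ C ∧ ∀ D : Submodule F E, D < C → Indep ρ D

/-- Open spaces: sums of circuits. -/
def IsOpenSp (ρ : Submodule F E → ℕ) (V : Submodule F E) : Prop :=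
  ∃ S : Set (Submodule F E), (∀ C ∈ S, IsCircuit ρ C) ∧ V = sSup S

/-- The cyclic core: the sum of all circuits contained in `V`. -/
def cyc (ρ : Submodule F E → ℕ) (V : Submodule F E) : Submodule F E :=
  sSup {C : Submodule F E | IsCircuit ρ C ∧ C ≤ V}

/-- The closure operator: the sum of all `⟨x⟩` with `ρ(V + ⟨x⟩) = ρ V`. -/
def cl (ρ : Submodule F E → ℕ) (V : Submodule F E) : Submodule F E :=
  sSup {W : Submodule F E | ∃ x : E, ρ (V ⊔ span F {x}) = ρ V ∧ W = span F {x}}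

/-- Flats. -/
def IsFlat (ρ : Submodule F E → ℕ) (V : Submodule F E) : Prop :=
  ∀ x : E, x ∉ V → ρ V < ρ (V ⊔ span F {x})

/-- Cyclic flats. -/
def CyclicFlat (ρ : Submodule F E → ℕ) (V : Submodule F E) : Prop :=
  IsFlat ρ V ∧ IsOpenSp ρ V

end QM

namespace QM

variable {F E : Type*} [Field F] [AddCommGroup E] [Module F E] {ρ : Submodule F E → ℕ}

theorem cyc_le (ρ : Submodule F E → ℕ) (V : Submodule F E) : cyc ρ V ≤ V :=
  sSup_le fun _ hC => hC.2

theorem IsCircuit.le_cyc {C V : Submodule F E} (hC : IsCircuit ρ C) (h : C ≤ V) :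
    C ≤ cyc ρ V :=
  le_sSup ⟨hC, h⟩

theorem cyc_mono {V W : Submodule F E} (h : V ≤ W) : cyc ρ V ≤ cyc ρ W :=
  sSup_le fun _ hC => hC.1.le_cyc (hC.2.trans h)

theorem cyc_eq_of_le {U W : Submodule F E} (hZW : cyc ρ U ≤ W) (hWU : W ≤ U) :
    cyc ρ W = cyc ρ U :=
  le_antisymm (cyc_mono hWU) (sSup_le fun _ hC => hC.1.le_cyc ((hC.1.le_cyc hC.2).trans hZW))

theorem isOpenSp_cyc (V : Submodule F E) : IsOpenSp ρ (cyc ρ V) :=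
  ⟨_, fun _ hC => hC.1, rfl⟩

theorem mem_cl_of_rk_sup_eq {V : Submodule F E} {x : E} (h : ρ (V ⊔ span F {x}) = ρ V) :
    x ∈ cl ρ V :=
  (le_sSup ⟨x, h, rfl⟩ : span F {x} ≤ cl ρ V) (mem_span_singleton_self x)

theorem le_cl (ρ : Submodule F E → ℕ) (V : Submodule F E) : V ≤ cl ρ V := fun x hx =>
  mem_cl_of_rk_sup_eq (by rw [sup_eq_left.mpr ((span_singleton_le_iff_mem x V).mpr hx)])

theorem _root_.Maximal.mem_of_sup_span_singleton {P : Submodule F E → Prop} {M : Submodule F E}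
    (hM : Maximal P M) {x : E} (hx : P (M ⊔ span F {x})) : x ∈ M :=
  (span_singleton_le_iff_mem x M).mp (le_sup_right.trans (hM.le_of_ge hx le_sup_left))

theorem exists_isCircuit_le [FiniteDimensional F E] {U : Submodule F E} (h : ¬ Indep ρ U) :
    ∃ C ≤ U, IsCircuit ρ C := by
  obtain ⟨C, hCU, hC⟩ := exists_minimal_le_of_wellFoundedLT (fun D => ¬ Indep ρ D) U h
  exact ⟨C, hCU, hC.prop, fun D hD => not_not.mp (hC.not_prop_of_lt hD)⟩

namespace IsRkFn

variable (hρ : IsRkFn F ρ)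
include hρ

theorem rk_le_finrank (V : Submodule F E) : ρ V ≤ finrank F V := hρ.1 V

theorem mono : Monotone ρ := fun _ _ h => hρ.2.1 h

theorem rk_sup_add_rk_inf_le (V W : Submodule F E) : ρ (V ⊔ W) + ρ (V ⊓ W) ≤ ρ V + ρ W :=
  hρ.2.2 V W

theorem rk_bot : ρ ⊥ = 0 := by
  simpa using hρ.rk_le_finrank ⊥

theorem rk_sup_add_le_of_le {Z W : Submodule F E} (hZW : Z ≤ W) (A : Submodule F E) :
    ρ (W ⊔ A) + ρ Z ≤ ρ W + ρ (Z ⊔ A) := by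
  have h := hρ.rk_sup_add_rk_inf_le W (Z ⊔ A)
  rw [← sup_assoc, sup_eq_left.mpr hZW] at h
  have := hρ.mono (le_inf hZW le_sup_left : Z ≤ W ⊓ (Z ⊔ A))
  omega

theorem rk_sup_le_add_finrank (V W : Submodule F E) : ρ (V ⊔ W) ≤ ρ V + finrank F W := by
  have h := hρ.rk_sup_add_le_of_le (bot_le : ⊥ ≤ V) W
  rw [bot_sup_eq, hρ.rk_bot] at h
  have := hρ.rk_le_finrank W
  omega

variable [FiniteDimensional F E]

theorem rk_add_finrank_le_of_le {U W : Submodule F E} (h : U ≤ W) :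
    ρ W + finrank F U ≤ ρ U + finrank F W := by
  obtain ⟨C, hUC, rfl⟩ := IsModularLattice.exists_disjoint_and_sup_eq h
  have hdim := Submodule.finrank_sup_add_finrank_inf_eq U C
  rw [hUC.eq_bot, finrank_bot] at hdim
  have := hρ.rk_sup_le_add_finrank U C
  omega

theorem indep_of_le {U W : Submodule F E} (h : U ≤ W) (hW : Indep ρ W) : Indep ρ U := by
  have := hρ.rk_add_finrank_le_of_le h
  have := hρ.rk_le_finrank U
  have := Submodule.finrank_mono h
  unfold Indep at *
  omega

theorem rk_sup_sSup_eq {V : Submodule F E} {S : Set (Submodule F E)}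
    (h : ∀ A ∈ S, ρ (V ⊔ A) = ρ V) : ρ (V ⊔ sSup S) = ρ V := by
  obtain ⟨M, hM⟩ :=
    exists_maximal_of_wellFoundedGT (fun A => ρ (V ⊔ A) = ρ V) ⟨⊥, by rw [sup_bot_eq]⟩
  have hSM : sSup S ≤ M := sSup_le fun A hA => by
    have hMA : ρ (V ⊔ M ⊔ A) = ρ V := by
      have := hρ.rk_sup_add_le_of_le (le_sup_left : V ≤ V ⊔ M) A
      have := hρ.mono (le_sup_left.trans le_sup_left : V ≤ V ⊔ M ⊔ A)
      have := hM.prop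
      have := h A hA
      omega
    exact le_sup_right.trans (hM.le_of_ge (by rwa [← sup_assoc]) le_sup_left)
  exact le_antisymm ((hρ.mono (sup_le_sup_left hSM V)).trans hM.prop.le) (hρ.mono le_sup_left)

theorem rk_cl (V : Submodule F E) : ρ (cl ρ V) = ρ V := by
  have h : ρ (V ⊔ cl ρ V) = ρ V := hρ.rk_sup_sSup_eq (by rintro _ ⟨x, hx, rfl⟩; exact hx)
  rwa [sup_eq_right.mpr (le_cl ρ V)] at h

theorem isFlat_cl (V : Submodule F E) : IsFlat ρ (cl ρ V) := by
  intro x hx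
  by_contra! hle
  refine hx (mem_cl_of_rk_sup_eq (le_antisymm ?_ (hρ.mono le_sup_left)))
  calc ρ (V ⊔ span F {x}) ≤ ρ (cl ρ V ⊔ span F {x}) := hρ.mono (sup_le_sup_right (le_cl ρ V) _)
    _ ≤ ρ (cl ρ V) := hle
    _ = ρ V := hρ.rk_cl V

theorem exists_indep_le_rk_eq (H : Submodule F E) : ∃ I ≤ H, Indep ρ I ∧ ρ I = ρ H := by
  obtain ⟨I, hI⟩ := exists_maximal_of_wellFoundedGT (fun I => I ≤ H ∧ Indep ρ I)
    ⟨⊥, bot_le, by rw [Indep, hρ.rk_bot, finrank_bot]⟩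
  obtain ⟨hIH, hIind⟩ := hI.prop
  have hHcl : H ≤ cl ρ I := fun x hxH => by
    refine mem_cl_of_rk_sup_eq (le_antisymm ?_ (hρ.mono le_sup_left))
    by_contra! hlt
    by_cases hxI : x ∈ I
    · rw [sup_eq_left.mpr ((span_singleton_le_iff_mem x I).mpr hxI)] at hlt
      exact hlt.false
    · refine hxI (hI.mem_of_sup_span_singleton
        ⟨sup_le hIH ((span_singleton_le_iff_mem x H).mpr hxH), ?_⟩)
      have := finrank_sup_span_singleton hxI
      have := hρ.rk_le_finrank (I ⊔ span F {x})
      unfold Indep at *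
      omega
  exact ⟨I, hIH, hIind, le_antisymm (hρ.mono hIH) ((hρ.mono hHcl).trans (hρ.rk_cl I).le)⟩

theorem exists_isCircuit_not_le {H : Submodule F E} {x : E} (hx : x ∉ H)
    (hr : ρ (H ⊔ span F {x}) ≤ ρ H) : ∃ C ≤ H ⊔ span F {x}, IsCircuit ρ C ∧ ¬ C ≤ H := by
  obtain ⟨I, hIH, hI, hIr⟩ := hρ.exists_indep_le_rk_eq H
  have hxI : x ∉ I := fun h => hx (hIH h)
  have hdep : ¬ Indep ρ (I ⊔ span F {x}) := by
    have := finrank_sup_span_singleton hxI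
    have := hρ.mono (sup_le_sup_right hIH (span F {x}))
    unfold Indep at *
    omega
  obtain ⟨C, hC, hCirc⟩ := exists_isCircuit_le hdep
  refine ⟨C, hC.trans (sup_le_sup_right hIH _), hCirc, fun hCH => hCirc.1 (hρ.indep_of_le ?_ hI)⟩
  calc C ≤ (I ⊔ span F {x}) ⊓ H := le_inf hC hCH
    _ = I := by
      rw [sup_inf_assoc_of_le _ hIH, (disjoint_span_singleton_of_notMem hx).symm.eq_bot,
        sup_bot_eq]

theorem rk_lt_rk_sup_span_singleton_of_cyc_le {U W : Submodule F E} (hZW : cyc ρ U ≤ W)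
    (hWU : W ≤ U) {x : E} (hxU : x ∈ U) (hxW : x ∉ W) : ρ W < ρ (W ⊔ span F {x}) := by
  by_contra! hle
  obtain ⟨C, hC, hCirc, hCW⟩ := hρ.exists_isCircuit_not_le hxW hle
  have hCU : C ≤ U := hC.trans (sup_le hWU ((span_singleton_le_iff_mem x U).mpr hxU))
  exact hCW ((hCirc.le_cyc hCU).trans hZW)

theorem rk_add_finrank_cyc (U : Submodule F E) :
    ρ U + finrank F (cyc ρ U) = ρ (cyc ρ U) + finrank F U := by
  set Z := cyc ρ U
  obtain ⟨W, hW⟩ := exists_maximal_of_wellFoundedGT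
    (fun W => W ≤ U ∧ Z ≤ W ∧ ρ Z + finrank F W ≤ ρ W + finrank F Z)
    ⟨Z, cyc_le ρ U, le_rfl, le_rfl⟩
  obtain ⟨hWU, hZW, hWr⟩ := hW.prop
  have hWU' : W = U := by
    by_contra hne
    obtain ⟨x, hxU, hxW⟩ := SetLike.exists_of_lt (lt_of_le_of_ne hWU hne)
    refine hxW (hW.mem_of_sup_span_singleton ⟨sup_le hWU ((span_singleton_le_iff_mem x U).mpr hxU),
      hZW.trans le_sup_left, ?_⟩)
    have := hρ.rk_lt_rk_sup_span_singleton_of_cyc_le hZW hWU hxU hxW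
    have := finrank_sup_span_singleton hxW
    omega
  have : ρ U + finrank F Z ≤ ρ Z + finrank F U := hρ.rk_add_finrank_le_of_le (cyc_le ρ U)
  rw [hWU'] at hWr
  omega

theorem cyclicFlat_cyc_of_isFlat {Fl : Submodule F E} (hFl : IsFlat ρ Fl) :
    CyclicFlat ρ (cyc ρ Fl) := by
  refine ⟨fun x hx => ?_, isOpenSp_cyc Fl⟩
  by_cases hxFl : x ∈ Fl
  · exact hρ.rk_lt_rk_sup_span_singleton_of_cyc_le le_rfl (cyc_le ρ Fl) hxFl hx
  · by_contra! hle
    have := hρ.rk_sup_add_le_of_le (cyc_le ρ Fl) (span F {x})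
    have := hFl x hxFl
    omega

theorem cyclicFlat_cyc_cl (V : Submodule F E) : CyclicFlat ρ (cyc ρ (cl ρ V)) :=
  hρ.cyclicFlat_cyc_of_isFlat (hρ.isFlat_cl V)

theorem rk_add_finrank_cyc_cl (V : Submodule F E) :
    ρ V + finrank F (cyc ρ (cl ρ V)) =
      ρ (cyc ρ (cl ρ V)) + finrank F ↥(V ⊔ cyc ρ (cl ρ V)) := by
  have hU : V ⊔ cyc ρ (cl ρ V) ≤ cl ρ V := sup_le (le_cl ρ V) (cyc_le ρ _)
  have hcyc : cyc ρ (V ⊔ cyc ρ (cl ρ V)) = cyc ρ (cl ρ V) := cyc_eq_of_le le_sup_right hU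
  have := hρ.rk_add_finrank_cyc (V ⊔ cyc ρ (cl ρ V))
  have := hρ.mono hU
  have := hρ.mono (le_sup_left : V ≤ V ⊔ cyc ρ (cl ρ V))
  have := hρ.rk_cl V
  rw [hcyc] at *
  omega

end IsRkFn

end QM

namespace QM

variable {F E₁ E₂ : Type*} [Field F] [AddCommGroup E₁] [Module F E₁]
  [AddCommGroup E₂] [Module F E₂]

/-- The rank function of the direct sum `M₁ ⊕ M₂` on `E₁ × E₂`:
`ρ(V) = dim V + min { ρ₁(π₁ X) + ρ₂(π₂ X) − dim X : X ≤ V }`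
(written in `ℕ` as `min { ρ₁(π₁ X) + ρ₂(π₂ X) + (dim V − dim X) : X ≤ V }`,
which agrees since `dim X ≤ dim V`). -/
noncomputable def dsRank (ρ₁ : Submodule F E₁ → ℕ) (ρ₂ : Submodule F E₂ → ℕ)
    (V : Submodule F (E₁ × E₂)) : ℕ :=
  sInf {n : ℕ | ∃ X : Submodule F (E₁ × E₂), X ≤ V ∧
    n = ρ₁ (X.map (LinearMap.fst F E₁ E₂)) + ρ₂ (X.map (LinearMap.snd F E₁ E₂)) +
      (finrank F V - finrank F X)}

end QM


namespace QM

variable {F E₁ E₂ : Type*} [Field F]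
  [AddCommGroup E₁] [Module F E₁] [FiniteDimensional F E₁]
  [AddCommGroup E₂] [Module F E₂] [FiniteDimensional F E₂]

theorem finrank_submodule_prod (p : Submodule F E₁) (q : Submodule F E₂) :
    finrank F (p.prod q) = finrank F p + finrank F q := by
  let e : ↥(p.prod q) ≃ₗ[F] (↥p × ↥q) :=
    { toFun := fun x => (⟨x.1.1, x.2.1⟩, ⟨x.1.2, x.2.2⟩)
      map_add' := fun _ _ => rfl
      map_smul' := fun _ _ => rfl
      invFun := fun y => ⟨(y.1.1, y.2.1), ⟨y.1.2, y.2.2⟩⟩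
      left_inv := fun _ => rfl
      right_inv := fun _ => rfl }
  rw [e.finrank_eq, finrank_prod]

theorem finrank_sup_prod_add_finrank_le {X V : Submodule F (E₁ × E₂)} (hXV : X ≤ V)
    (Z₁ : Submodule F E₁) (Z₂ : Submodule F E₂) :
    finrank F ↥(V ⊔ Z₁.prod Z₂) + finrank F X ≤
      finrank F V + finrank F ↥(X.map (LinearMap.fst F E₁ E₂) ⊔ Z₁) +
        finrank F ↥(X.map (LinearMap.snd F E₁ E₂) ⊔ Z₂) := by
  set Z := Z₁.prod Z₂
  have hXZ : X ⊔ Z ≤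
      (X.map (LinearMap.fst F E₁ E₂) ⊔ Z₁).prod (X.map (LinearMap.snd F E₁ E₂) ⊔ Z₂) := by
    rw [← prod_sup_prod]
    exact sup_le_sup_right (fun x hx => ⟨⟨x, hx, rfl⟩, ⟨x, hx, rfl⟩⟩) Z
  have := Submodule.finrank_mono hXZ
  rw [finrank_submodule_prod] at this
  have := Submodule.finrank_sup_add_finrank_inf_eq V (X ⊔ Z)
  rw [← sup_assoc, sup_eq_left.mpr hXV] at this
  have := Submodule.finrank_mono (le_inf hXV le_sup_left : X ≤ V ⊓ (X ⊔ Z))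
  omega

theorem rk_map_inf_prod_le {ρ₁ : Submodule F E₁ → ℕ} {ρ₂ : Submodule F E₂ → ℕ}
    (h₁ : Monotone ρ₁) (h₂ : Monotone ρ₂) (V : Submodule F (E₁ × E₂))
    (Z₁ : Submodule F E₁) (Z₂ : Submodule F E₂) :
    ρ₁ ((V ⊓ Z₁.prod Z₂).map (LinearMap.fst F E₁ E₂)) +
        ρ₂ ((V ⊓ Z₁.prod Z₂).map (LinearMap.snd F E₁ E₂)) +
        (finrank F V - finrank F ↥(V ⊓ Z₁.prod Z₂)) ≤
      ρ₁ Z₁ + ρ₂ Z₂ + (finrank F ↥(V ⊔ Z₁.prod Z₂) - finrank F ↥(Z₁.prod Z₂)) := by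
  have := h₁ (show (V ⊓ Z₁.prod Z₂).map (LinearMap.fst F E₁ E₂) ≤ Z₁ by
    rintro _ ⟨x, hx, rfl⟩; exact hx.2.1)
  have := h₂ (show (V ⊓ Z₁.prod Z₂).map (LinearMap.snd F E₁ E₂) ≤ Z₂ by
    rintro _ ⟨x, hx, rfl⟩; exact hx.2.2)
  have := Submodule.finrank_sup_add_finrank_inf_eq V (Z₁.prod Z₂)
  have := Submodule.finrank_mono (inf_le_left : V ⊓ Z₁.prod Z₂ ≤ V)
  omega

theorem rk_cyc_cl_map_le {ρ₁ : Submodule F E₁ → ℕ} {ρ₂ : Submodule F E₂ → ℕ}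
    (h₁ : IsRkFn F ρ₁) (h₂ : IsRkFn F ρ₂) {X V : Submodule F (E₁ × E₂)} (hXV : X ≤ V) :
    ρ₁ (cyc ρ₁ (cl ρ₁ (X.map (LinearMap.fst F E₁ E₂)))) +
        ρ₂ (cyc ρ₂ (cl ρ₂ (X.map (LinearMap.snd F E₁ E₂)))) +
        (finrank F ↥(V ⊔ (cyc ρ₁ (cl ρ₁ (X.map (LinearMap.fst F E₁ E₂)))).prod
            (cyc ρ₂ (cl ρ₂ (X.map (LinearMap.snd F E₁ E₂))))) -
          finrank F ↥((cyc ρ₁ (cl ρ₁ (X.map (LinearMap.fst F E₁ E₂)))).prod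
            (cyc ρ₂ (cl ρ₂ (X.map (LinearMap.snd F E₁ E₂)))))) ≤
      ρ₁ (X.map (LinearMap.fst F E₁ E₂)) + ρ₂ (X.map (LinearMap.snd F E₁ E₂)) +
        (finrank F V - finrank F X) := by
  set X₁ := X.map (LinearMap.fst F E₁ E₂)
  set X₂ := X.map (LinearMap.snd F E₁ E₂)
  set Z₁ := cyc ρ₁ (cl ρ₁ X₁)
  set Z₂ := cyc ρ₂ (cl ρ₂ X₂)
  have : ρ₁ X₁ + finrank F Z₁ = ρ₁ Z₁ + finrank F ↥(X₁ ⊔ Z₁) := h₁.rk_add_finrank_cyc_cl X₁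
  have : ρ₂ X₂ + finrank F Z₂ = ρ₂ Z₂ + finrank F ↥(X₂ ⊔ Z₂) := h₂.rk_add_finrank_cyc_cl X₂
  have : finrank F ↥(V ⊔ Z₁.prod Z₂) + finrank F X ≤
      finrank F V + finrank F ↥(X₁ ⊔ Z₁) + finrank F ↥(X₂ ⊔ Z₂) :=
    finrank_sup_prod_add_finrank_le hXV Z₁ Z₂
  have := Submodule.finrank_mono hXV
  have := Submodule.finrank_mono (le_sup_right : Z₁.prod Z₂ ≤ V ⊔ Z₁.prod Z₂)
  rw [finrank_submodule_prod] at *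
  omega

end QM

namespace QM

variable {F E₁ E₂ : Type*} [Field F] [Fintype F]
  [AddCommGroup E₁] [Module F E₁] [FiniteDimensional F E₁]
  [AddCommGroup E₂] [Module F E₂] [FiniteDimensional F E₂]

theorem stmt15 (ρ₁ : Submodule F E₁ → ℕ) (ρ₂ : Submodule F E₂ → ℕ)
    (h₁ : IsRkFn F ρ₁) (h₂ : IsRkFn F ρ₂) (V : Submodule F (E₁ × E₂)) :
    dsRank ρ₁ ρ₂ V = sInf {n : ℕ | ∃ (Z₁ : Submodule F E₁) (Z₂ : Submodule F E₂),
      CyclicFlat ρ₁ Z₁ ∧ CyclicFlat ρ₂ Z₂ ∧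
      n = ρ₁ Z₁ + ρ₂ Z₂ +
        (finrank F ↥(V ⊔ Z₁.prod Z₂) - finrank F ↥(Z₁.prod Z₂))} := by
  apply csInf_eq_csInf_of_forall_exists_le
  · rintro _ ⟨X, hXV, rfl⟩
    exact ⟨_, ⟨_, _, h₁.cyclicFlat_cyc_cl _, h₂.cyclicFlat_cyc_cl _, rfl⟩,
      rk_cyc_cl_map_le h₁ h₂ hXV⟩
  · rintro _ ⟨Z₁, Z₂, -, -, rfl⟩
    exact ⟨_, ⟨_, inf_le_left, rfl⟩, rk_map_inf_prod_le h₁.mono h₂.mono V Z₁ Z₂⟩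

end QM
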